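/- Lamperti's theorem for ℓ^p of a countable discrete set: let p ∈ [1,∞) with p ≠ 2, and let X, Y be countable sets. If U : ℓ^p(X) → ℓ^p(Y) is a surjective linear isometry, then there exist a function h : Y → 𝕋 (the unit circle in ℂ) and a bijection g : X → Y such that (Uξ)(y) = h(y)·ξ(g⁻¹(y)) for all ξ ∈ ℓ^p(X) and y ∈ Y. -/

import Mathlib

open scoped ENNReal

/-- A map between (pseudo)metric spaces is uniformly expansive if points at distance at most `R`
are sent to points at distance at most `S = S(R)`. -/
def UniformlyExpansive {X Y : Type*} [PseudoMetricSpace X] [PseudoMetricSpace Y]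
    (f : X → Y) : Prop :=
  ∀ R : ℝ, 0 < R → ∃ S : ℝ, 0 < S ∧ ∀ x₁ x₂ : X, dist x₁ x₂ ≤ R → dist (f x₁) (f x₂) ≤ S

/-- Two maps are close if they are at uniformly bounded distance. -/
def Close {X Y : Type*} [PseudoMetricSpace Y] (f g : X → Y) : Prop :=
  ∃ C : ℝ, 0 < C ∧ ∀ x : X, dist (f x) (g x) ≤ C

/-- `f : X → Y` is a coarse equivalence if it is uniformly expansive and admits a uniformly
expansive coarse inverse. -/
def IsCoarseEquivalence {X Y : Type*} [PseudoMetricSpace X] [PseudoMetricSpace Y]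
    (f : X → Y) : Prop :=
  UniformlyExpansive f ∧
    ∃ g : Y → X, UniformlyExpansive g ∧ Close (f ∘ g) id ∧ Close (g ∘ f) id

/-- A metric space has bounded geometry if balls of radius `R` have uniformly bounded
cardinality. -/
def BoundedGeometry (X : Type*) [PseudoMetricSpace X] : Prop :=
  ∀ R : ℝ, 0 ≤ R → ∃ N : ℕ, ∀ x : X,
    (Metric.closedBall x R).Finite ∧ (Metric.closedBall x R).ncard ≤ N

/-- The standard basis vector `δ_x` of `ℓ^p(X)`. -/
noncomputable def delta {X : Type*} (p : ℝ≥0∞) (x : X) : lp (fun _ : X => ℂ) p :=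
  letI := Classical.decEq X
  lp.single p x 1

/-- The matrix coefficient `T_{xy} = (T δ_y)(x)` of a bounded operator on `ℓ^p`. -/
noncomputable def matCoef {X Y : Type*} (p : ℝ≥0∞) [Fact (1 ≤ p)]
    (T : lp (fun _ : X => ℂ) p →L[ℂ] lp (fun _ : Y => ℂ) p) (y : Y) (x : X) : ℂ :=
  T (delta p x) y

/-- `T` has propagation at most `R`. -/
def HasPropagationLE {X : Type*} [PseudoMetricSpace X] (p : ℝ≥0∞) [Fact (1 ≤ p)]
    (T : lp (fun _ : X => ℂ) p →L[ℂ] lp (fun _ : X => ℂ) p) (R : ℝ) : Prop :=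
  ∀ x y : X, matCoef p T x y ≠ 0 → dist x y ≤ R

/-- `T` has finite propagation. -/
def FiniteProp {X : Type*} [PseudoMetricSpace X] (p : ℝ≥0∞) [Fact (1 ≤ p)]
    (T : lp (fun _ : X => ℂ) p →L[ℂ] lp (fun _ : X => ℂ) p) : Prop :=
  ∃ R : ℝ, 0 ≤ R ∧ HasPropagationLE p T R

/-- The `ℓ^p` uniform Roe algebra of `X`, as the operator-norm closure of the set of
finite propagation bounded operators on `ℓ^p(X)`. -/
noncomputable def RoeAlgSet (X : Type*) [PseudoMetricSpace X] (p : ℝ≥0∞) [Fact (1 ≤ p)] :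
    Set (lp (fun _ : X => ℂ) p →L[ℂ] lp (fun _ : X => ℂ) p) :=
  closure {T | FiniteProp p T}

section Pointwise

open Real

variable {q : ℝ}

private lemma rpow_self_mul' (w : ℝ) (hw : 0 < w) {s : ℝ} : w ^ s = w * w ^ (s - 1) := by
  rw [show s = 1 + (s - 1) by ring, Real.rpow_add hw, Real.rpow_one]; ring_nf

private lemma rpow_add_lt_of_lt_one' {u v s : ℝ} (hu : 0 < u) (hv : 0 < v) (hs1 : s < 1) :
    (u + v) ^ s < u ^ s + v ^ s := by
  have huv : 0 < u + v := by linarith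
  have h1 : (u + v) ^ (s-1) < u ^ (s-1) :=
    Real.rpow_lt_rpow_of_neg hu (by linarith) (by linarith)
  have h2 : (u + v) ^ (s-1) < v ^ (s-1) :=
    Real.rpow_lt_rpow_of_neg hv (by linarith) (by linarith)
  rw [rpow_self_mul' u hu, rpow_self_mul' v hv, rpow_self_mul' (u+v) huv]
  nlinarith [mul_lt_mul_of_pos_left h1 hu, mul_lt_mul_of_pos_left h2 hv]

private lemma rpow_add_le_of_lt_one' {u v s : ℝ} (hu : 0 ≤ u) (hv : 0 ≤ v) (hs0 : 0 < s)
    (hs1 : s < 1) : (u + v) ^ s ≤ u ^ s + v ^ s := by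
  rcases eq_or_lt_of_le hu with rfl | hu'
  · simp [Real.zero_rpow hs0.ne']
  rcases eq_or_lt_of_le hv with rfl | hv'
  · simp [Real.zero_rpow hs0.ne']
  exact (rpow_add_lt_of_lt_one' hu' hv' hs1).le

private lemma add_rpow_lt_of_one_lt' {u v s : ℝ} (hu : 0 < u) (hv : 0 < v) (hs1 : 1 < s) :
    u ^ s + v ^ s < (u + v) ^ s := by
  have huv : 0 < u + v := by linarith
  have h1 : u ^ (s-1) < (u + v) ^ (s-1) :=
    Real.rpow_lt_rpow hu.le (by linarith) (by linarith)
  have h2 : v ^ (s-1) < (u + v) ^ (s-1) :=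
    Real.rpow_lt_rpow hv.le (by linarith) (by linarith)
  rw [rpow_self_mul' u hu, rpow_self_mul' v hv, rpow_self_mul' (u+v) huv]
  nlinarith [mul_lt_mul_of_pos_left h1 hu, mul_lt_mul_of_pos_left h2 hv]

private lemma add_rpow_le_of_one_lt' {u v s : ℝ} (hu : 0 ≤ u) (hv : 0 ≤ v) (hs1 : 1 < s) :
    u ^ s + v ^ s ≤ (u + v) ^ s := by
  rcases eq_or_lt_of_le hu with rfl | hu'
  · simp [Real.zero_rpow (by positivity : s ≠ 0)]
  rcases eq_or_lt_of_le hv with rfl | hv'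
  · simp [Real.zero_rpow (by positivity : s ≠ 0)]
  exact (add_rpow_lt_of_one_lt' hu' hv' hs1).le

private lemma sq_rpow_half' (x q : ℝ) (hx : 0 ≤ x) : (x * x) ^ (q / 2) = x ^ q := by
  have : x * x = x ^ (2 : ℝ) := by
    rw [show (2:ℝ) = ((2:ℕ):ℝ) by norm_num, Real.rpow_natCast]; ring
  rw [this, ← Real.rpow_mul hx]
  congr 1; ring

private lemma step1_le' (hq0 : 0 < q) (hq2 : q ≤ 2) (a b : ℂ) :
    ‖a + b‖ ^ q + ‖a - b‖ ^ q ≤ 2 * ((‖a‖ * ‖a‖ + ‖b‖ * ‖b‖) ^ (q / 2)) := by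
  set s := q / 2 with hs
  set A := ‖a + b‖ * ‖a + b‖ with hA
  set B := ‖a - b‖ * ‖a - b‖ with hB
  have hA0 : 0 ≤ A := mul_self_nonneg _
  have hB0 : 0 ≤ B := mul_self_nonneg _
  have e1 : ‖a + b‖ ^ q = A ^ s := (sq_rpow_half' _ q (norm_nonneg _)).symm
  have e2 : ‖a - b‖ ^ q = B ^ s := (sq_rpow_half' _ q (norm_nonneg _)).symm
  have conc := (Real.concaveOn_rpow (p := s) (by positivity) (by rw [hs]; linarith)).2
    (Set.mem_Ici.2 hA0) (Set.mem_Ici.2 hB0)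
    (by norm_num : (0:ℝ) ≤ 1/2) (by norm_num : (0:ℝ) ≤ 1/2) (by norm_num)
  simp only [smul_eq_mul] at conc
  have hmid : (1/2) * A + (1/2) * B = ‖a‖ * ‖a‖ + ‖b‖ * ‖b‖ := by
    have := parallelogram_law_with_norm ℂ a b; rw [hA, hB]; linarith
  rw [e1, e2, ← hmid]
  linarith

private lemma step1_ge' (hq2 : 2 ≤ q) (a b : ℂ) :
    2 * ((‖a‖ * ‖a‖ + ‖b‖ * ‖b‖) ^ (q / 2)) ≤ ‖a + b‖ ^ q + ‖a - b‖ ^ q := by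
  set s := q / 2 with hs
  set A := ‖a + b‖ * ‖a + b‖ with hA
  set B := ‖a - b‖ * ‖a - b‖ with hB
  have hA0 : 0 ≤ A := mul_self_nonneg _
  have hB0 : 0 ≤ B := mul_self_nonneg _
  have e1 : ‖a + b‖ ^ q = A ^ s := (sq_rpow_half' _ q (norm_nonneg _)).symm
  have e2 : ‖a - b‖ ^ q = B ^ s := (sq_rpow_half' _ q (norm_nonneg _)).symm
  have conv := (convexOn_rpow (p := s) (by rw [hs]; linarith : 1 ≤ s)).2
    (Set.mem_Ici.2 hA0) (Set.mem_Ici.2 hB0)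
    (by norm_num : (0:ℝ) ≤ 1/2) (by norm_num : (0:ℝ) ≤ 1/2) (by norm_num)
  simp only [smul_eq_mul] at conv
  have hmid : (1/2) * A + (1/2) * B = ‖a‖ * ‖a‖ + ‖b‖ * ‖b‖ := by
    have := parallelogram_law_with_norm ℂ a b; rw [hA, hB]; linarith
  rw [e1, e2, ← hmid]
  linarith

private lemma ptwise_le_of_lt_two' (hq0 : 0 < q) (hq2 : q < 2) (a b : ℂ) :
    ‖a + b‖ ^ q + ‖a - b‖ ^ q ≤ 2 * (‖a‖ ^ q + ‖b‖ ^ q) := by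
  refine (step1_le' hq0 hq2.le a b).trans ?_
  have h := rpow_add_le_of_lt_one' (mul_self_nonneg ‖a‖) (mul_self_nonneg ‖b‖)
    (by positivity : (0:ℝ) < q/2) (by linarith : q/2 < 1)
  rw [sq_rpow_half' _ q (norm_nonneg a), sq_rpow_half' _ q (norm_nonneg b)] at h
  linarith

private lemma ptwise_lt_of_lt_two' (hq0 : 0 < q) (hq2 : q < 2) {a b : ℂ} (ha : a ≠ 0)
    (hb : b ≠ 0) : ‖a + b‖ ^ q + ‖a - b‖ ^ q < 2 * (‖a‖ ^ q + ‖b‖ ^ q) := by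
  refine (step1_le' hq0 hq2.le a b).trans_lt ?_
  have ha' : 0 < ‖a‖ * ‖a‖ := by
    have := norm_pos_iff.mpr ha; positivity
  have hb' : 0 < ‖b‖ * ‖b‖ := by
    have := norm_pos_iff.mpr hb; positivity
  have h := rpow_add_lt_of_lt_one' ha' hb' (by linarith : q/2 < 1)
  rw [sq_rpow_half' _ q (norm_nonneg a), sq_rpow_half' _ q (norm_nonneg b)] at h
  linarith

private lemma ptwise_ge_of_two_lt' (hq2 : 2 < q) (a b : ℂ) :
    2 * (‖a‖ ^ q + ‖b‖ ^ q) ≤ ‖a + b‖ ^ q + ‖a - b‖ ^ q := by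
  refine le_trans ?_ (step1_ge' hq2.le a b)
  have h := add_rpow_le_of_one_lt' (mul_self_nonneg ‖a‖) (mul_self_nonneg ‖b‖)
    (by linarith : 1 < q/2)
  rw [sq_rpow_half' _ q (norm_nonneg a), sq_rpow_half' _ q (norm_nonneg b)] at h
  linarith

private lemma ptwise_gt_of_two_lt' (hq2 : 2 < q) {a b : ℂ} (ha : a ≠ 0) (hb : b ≠ 0) :
    2 * (‖a‖ ^ q + ‖b‖ ^ q) < ‖a + b‖ ^ q + ‖a - b‖ ^ q := by
  refine lt_of_lt_of_le ?_ (step1_ge' hq2.le a b)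
  have ha' : 0 < ‖a‖ * ‖a‖ := by
    have := norm_pos_iff.mpr ha; positivity
  have hb' : 0 < ‖b‖ * ‖b‖ := by
    have := norm_pos_iff.mpr hb; positivity
  have h := add_rpow_lt_of_one_lt' ha' hb' (by linarith : 1 < q/2)
  rw [sq_rpow_half' _ q (norm_nonneg a), sq_rpow_half' _ q (norm_nonneg b)] at h
  linarith

private lemma ptwise_eq_of_mul_eq_zero' (hq0 : 0 < q) {a b : ℂ} (h : a * b = 0) :
    ‖a + b‖ ^ q + ‖a - b‖ ^ q = 2 * (‖a‖ ^ q + ‖b‖ ^ q) := by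
  rcases mul_eq_zero.mp h with rfl | rfl
  · simp [Real.zero_rpow hq0.ne', norm_neg]
    ring
  · simp [Real.zero_rpow hq0.ne']
    ring

end Pointwise

section LpAux

set_option linter.unusedSectionVars false

variable {X Y : Type*} {p : ℝ≥0∞} [Fact (1 ≤ p)]

private lemma p_ne_zero : p ≠ 0 := (lt_of_lt_of_le zero_lt_one Fact.out).ne'

private lemma toReal_pos' (hp : p ≠ ∞) : 0 < p.toReal :=
  ENNReal.toReal_pos p_ne_zero hp

private lemma toReal_ne_two' (hp : p ≠ ∞) (hp2 : p ≠ 2) : p.toReal ≠ 2 := by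
  intro h
  exact hp2 ((ENNReal.toReal_eq_toReal_iff' hp (by norm_num)).mp (by simpa using h))

private lemma lp_disjoint_iff (hp : p ≠ ∞) (hp2 : p ≠ 2) (ξ η : lp (fun _ : X => ℂ) p) :
    ‖ξ + η‖ ^ p.toReal + ‖ξ - η‖ ^ p.toReal = 2 * (‖ξ‖ ^ p.toReal + ‖η‖ ^ p.toReal)
      ↔ ∀ x, ξ x * η x = 0 := by
  have hq0 : 0 < p.toReal := toReal_pos' hp
  have hq2 : p.toReal ≠ 2 := toReal_ne_two' hp hp2
  set q := p.toReal with hq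
  have hadd : ∀ x, (ξ + η) x = ξ x + η x := fun x => by rw [lp.coeFn_add]; rfl
  have hsub : ∀ x, (ξ - η) x = ξ x - η x := fun x => by rw [lp.coeFn_sub]; rfl
  have Hf : HasSum (fun x => ‖ξ x + η x‖ ^ q + ‖ξ x - η x‖ ^ q)
      (‖ξ + η‖ ^ q + ‖ξ - η‖ ^ q) := by
    have h1 := lp.hasSum_norm hq0 (ξ + η)
    have h2 := lp.hasSum_norm hq0 (ξ - η)
    simp only [hadd] at h1
    simp only [hsub] at h2
    exact h1.add h2
  have Hg : HasSum (fun x => 2 * (‖ξ x‖ ^ q + ‖η x‖ ^ q)) (2 * (‖ξ‖ ^ q + ‖η‖ ^ q)) :=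
    ((lp.hasSum_norm hq0 ξ).add (lp.hasSum_norm hq0 η)).mul_left 2
  constructor
  · intro hEq x
    by_contra hx
    obtain ⟨hxa, hxb⟩ := mul_ne_zero_iff.mp hx
    rcases lt_or_gt_of_ne hq2 with h2 | h2
    · have hlt := hasSum_lt (i := x)
        (fun x' => ptwise_le_of_lt_two' hq0 h2 (ξ x') (η x'))
        (ptwise_lt_of_lt_two' hq0 h2 hxa hxb) Hf Hg
      linarith
    · have hlt := hasSum_lt (i := x)
        (fun x' => ptwise_ge_of_two_lt' h2 (ξ x') (η x'))
        (ptwise_gt_of_two_lt' h2 hxa hxb) Hg Hf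
      linarith
  · intro hdisj
    refine Hf.unique ?_
    have heq : (fun x => ‖ξ x + η x‖ ^ q + ‖ξ x - η x‖ ^ q)
        = fun x => 2 * (‖ξ x‖ ^ q + ‖η x‖ ^ q) :=
      funext fun x => ptwise_eq_of_mul_eq_zero' hq0 (hdisj x)
    rw [heq]
    exact Hg

private lemma map_disjoint (hp : p ≠ ∞) (hp2 : p ≠ 2)
    (V : lp (fun _ : X => ℂ) p ≃ₗᵢ[ℂ] lp (fun _ : Y => ℂ) p)
    {ξ η : lp (fun _ : X => ℂ) p} (h : ∀ x, ξ x * η x = 0) :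
    ∀ y, V ξ y * V η y = 0 := by
  refine (lp_disjoint_iff hp hp2 _ _).mp ?_
  have hD := (lp_disjoint_iff hp hp2 ξ η).mpr h
  simpa only [← map_add, ← map_sub, LinearIsometryEquiv.norm_map] using hD

private lemma delta_apply_self (x : X) : delta p x x = 1 := by
  letI := Classical.decEq X
  exact lp.single_apply_self p x 1

private lemma delta_apply_ne {x x' : X} (h : x' ≠ x) : delta p x x' = 0 := by
  letI := Classical.decEq X
  exact lp.single_apply_ne p x 1 h

private lemma norm_delta (hp : p ≠ ∞) (x : X) : ‖delta (X := X) p x‖ = 1 := by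
  letI := Classical.decEq X
  have := lp.norm_single (E := fun _ : X => ℂ) (p := p) (pos_iff_ne_zero.mpr p_ne_zero) x (1 : ℂ)
  simpa [delta] using this

private lemma hasSum_delta_smul (hp : p ≠ ∞) (f : lp (fun _ : X => ℂ) p) :
    HasSum (fun x => f x • delta p x) f := by
  letI := Classical.decEq X
  have h := lp.hasSum_single hp f
  have e : (fun x => f x • delta (X := X) p x) = fun x => lp.single p x (f x) := by
    funext x
    refine lp.ext (funext fun x' => ?_)
    rw [lp.coeFn_smul, Pi.smul_apply, smul_eq_mul]
    rcases eq_or_ne x' x with rfl | hne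
    · rw [delta_apply_self, mul_one, lp.single_apply_self]
    · rw [delta_apply_ne hne, mul_zero, lp.single_apply_ne p x _ hne]
  rw [e]
  exact h

/-- Evaluation at a point as a continuous linear functional on `ℓ^p`. -/
private noncomputable def evalCLM (p : ℝ≥0∞) [Fact (1 ≤ p)] {X : Type*} (x : X) :
    lp (fun _ : X => ℂ) p →L[ℂ] ℂ :=
  LinearMap.mkContinuous
    { toFun := fun f => f x
      map_add' := fun f g => by simp [lp.coeFn_add]
      map_smul' := fun c f => by simp [lp.coeFn_smul] }
    1 (fun f => by exact (lp.norm_apply_le_norm p_ne_zero f x).trans_eq (one_mul _).symm)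

@[simp] private lemma evalCLM_apply (x : X) (f : lp (fun _ : X => ℂ) p) :
    evalCLM p x f = f x := rfl

end LpAux

/-- Lamperti's theorem for `ℓ^p` of a countable discrete set: for `p ∈ [1,∞)`, `p ≠ 2`,
every surjective linear isometry `U : ℓ^p(X) → ℓ^p(Y)` is of the form
`(Uξ)(y) = h(y) · ξ(g⁻¹(y))` for a unimodular function `h : Y → 𝕋` and a bijection
`g : X → Y`. -/
theorem lamperti {X Y : Type*} [Countable X] [Countable Y]
    (p : ℝ≥0∞) [Fact (1 ≤ p)] (hp : p ≠ ∞) (hp2 : p ≠ 2)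
    (U : lp (fun _ : X => ℂ) p ≃ₗᵢ[ℂ] lp (fun _ : Y => ℂ) p) :
    ∃ (h : Y → ℂ) (g : X ≃ Y), (∀ y : Y, ‖h y‖ = 1) ∧
      ∀ (ξ : lp (fun _ : X => ℂ) p) (y : Y), (U ξ) y = h y * ξ (g.symm y) := by
  -- disjointness of images of basis vectors
  have h1 : ∀ x x' : X, x ≠ x' → ∀ y, U (delta p x) y * U (delta p x') y = 0 := by
    intro x x' hne
    refine map_disjoint hp hp2 U ?_
    intro x''
    rcases eq_or_ne x'' x with h | h
    · rw [h, delta_apply_ne hne, mul_zero]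
    · rw [delta_apply_ne h, zero_mul]
  have h2 : ∀ y y' : Y, y ≠ y' → ∀ x, U.symm (delta p y) x * U.symm (delta p y') x = 0 := by
    intro y y' hne
    refine map_disjoint hp hp2 U.symm ?_
    intro y''
    rcases eq_or_ne y'' y with h | h
    · rw [h, delta_apply_ne hne, mul_zero]
    · rw [delta_apply_ne h, zero_mul]
  -- nonvanishing
  have hnz : ∀ x : X, ∃ y, U (delta p x) y ≠ 0 := by
    intro x
    by_contra hc
    push_neg at hc
    have hzero : U (delta p x) = 0 := lp.ext (funext fun y => by simp [hc y])
    have hn := U.norm_map (delta p x)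
    rw [hzero, norm_delta hp, norm_zero] at hn
    exact one_ne_zero hn.symm
  have hnz' : ∀ y : Y, ∃ x, U.symm (delta p y) x ≠ 0 := by
    intro y
    by_contra hc
    push_neg at hc
    have hzero : U.symm (delta p y) = 0 := lp.ext (funext fun x => by simp [hc x])
    have hn := U.symm.norm_map (delta p y)
    rw [hzero, norm_delta hp, norm_zero] at hn
    exact one_ne_zero hn.symm
  -- supports of preimages of deltas collapse
  have uniq : ∀ (x : X) (y : Y), U (delta p x) y ≠ 0 →
      ∀ x₁ : X, U.symm (delta p y) x₁ ≠ 0 → x₁ = x := by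
    intro x y hy x₁ hx₁
    have Hexp : HasSum (fun y' => U (delta p x) y' • U.symm (delta p y')) (delta p x) := by
      have hs := (hasSum_delta_smul hp (U (delta p x))).mapL
        U.symm.toLinearIsometry.toContinuousLinearMap
      simpa only [LinearIsometry.coe_toContinuousLinearMap,
        LinearIsometryEquiv.coe_toLinearIsometry, map_smul,
        LinearIsometryEquiv.symm_apply_apply] using hs
    have Hcoord := Hexp.mapL (evalCLM p x₁)
    simp only [evalCLM_apply, lp.coeFn_smul, Pi.smul_apply, smul_eq_mul] at Hcoord
    have Hone : HasSum (fun y' => U (delta p x) y' * U.symm (delta p y') x₁)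
        (U (delta p x) y * U.symm (delta p y) x₁) := by
      refine hasSum_single y (fun y' hy' => ?_)
      have hp2' := h2 y' y hy' x₁
      have hz : U.symm (delta p y') x₁ = 0 := by
        rcases mul_eq_zero.mp hp2' with h | h
        · exact h
        · exact absurd h hx₁
      rw [hz, mul_zero]
    have hval : delta p x x₁ = U (delta p x) y * U.symm (delta p y) x₁ := Hcoord.unique Hone
    by_contra hne
    rw [delta_apply_ne hne] at hval
    exact mul_ne_zero hy hx₁ hval.symm
  have usupp : ∀ (x : X) (y y' : Y), U (delta p x) y ≠ 0 → U (delta p x) y' ≠ 0 → y = y' := by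
    intro x y y' hy hy'
    by_contra hne
    obtain ⟨x₁, hx₁⟩ := hnz' y
    obtain ⟨x₂, hx₂⟩ := hnz' y'
    have e1 := uniq x y hy x₁ hx₁
    have e2 := uniq x y' hy' x₂ hx₂
    rw [e1] at hx₁
    rw [e2] at hx₂
    have := h2 y y' hne x
    rcases mul_eq_zero.mp this with h | h
    · exact hx₁ h
    · exact hx₂ h
  choose g0 hg0 using hnz
  have Ueq : ∀ x, U (delta p x) = U (delta p x) (g0 x) • delta p (g0 x) := by
    intro x
    refine lp.ext (funext fun y => ?_)
    show U (delta p x) y = (U (delta p x) (g0 x) • delta p (g0 x)) y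
    rcases eq_or_ne y (g0 x) with rfl | hne
    · rw [lp.coeFn_smul, Pi.smul_apply, delta_apply_self, smul_eq_mul, mul_one]
    · have hz : U (delta p x) y = 0 := by
        by_contra hcn
        exact hne (usupp x y (g0 x) hcn (hg0 x))
      rw [hz, lp.coeFn_smul, Pi.smul_apply, delta_apply_ne hne, smul_zero]
  have hinj : Function.Injective g0 := by
    intro x x' he
    by_contra hne
    have hd := h1 x x' hne (g0 x)
    rcases mul_eq_zero.mp hd with h | h
    · exact hg0 x h
    · rw [he] at h
      exact hg0 x' h
  have hUsymm : ∀ x, U.symm (delta p (g0 x)) = (U (delta p x) (g0 x))⁻¹ • delta p x := by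
    intro x
    have hc : U (delta p x) (g0 x) ≠ 0 := hg0 x
    have hthis := congrArg U.symm (Ueq x)
    rw [LinearIsometryEquiv.symm_apply_apply, map_smul] at hthis
    rw [eq_comm, inv_smul_eq_iff₀ hc]
    exact hthis
  have hsurj : Function.Surjective g0 := by
    intro y
    obtain ⟨x, hx⟩ := hnz' y
    refine ⟨x, ?_⟩
    by_contra hne
    have hd := h2 y (g0 x) (fun h => hne h.symm) x
    have h2nd : U.symm (delta p (g0 x)) x ≠ 0 := by
      rw [hUsymm x, lp.coeFn_smul, Pi.smul_apply, delta_apply_self, smul_eq_mul, mul_one]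
      exact inv_ne_zero (hg0 x)
    exact mul_ne_zero hx h2nd hd
  let g : X ≃ Y := Equiv.ofBijective g0 ⟨hinj, hsurj⟩
  have hgx : ∀ y : Y, g0 (g.symm y) = y := fun y => g.apply_symm_apply y
  refine ⟨fun y => U (delta p (g.symm y)) y, g, ?_, ?_⟩
  · intro y
    have h1' : ‖U (delta p (g.symm y))‖ = 1 := by
      rw [LinearIsometryEquiv.norm_map, norm_delta hp]
    rw [Ueq (g.symm y), norm_smul, norm_delta hp, mul_one, hgx y] at h1'
    exact h1'
  · intro ξ y
    have Hexp := (hasSum_delta_smul hp ξ).mapL U.toLinearIsometry.toContinuousLinearMap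
    simp only [LinearIsometry.coe_toContinuousLinearMap,
      LinearIsometryEquiv.coe_toLinearIsometry, map_smul] at Hexp
    have Hc := Hexp.mapL (evalCLM p y)
    simp only [evalCLM_apply, lp.coeFn_smul, Pi.smul_apply, smul_eq_mul] at Hc
    have Hone : HasSum (fun x => ξ x * U (delta p x) y)
        (ξ (g.symm y) * U (delta p (g.symm y)) y) := by
      refine hasSum_single (g.symm y) (fun x hxne => ?_)
      have hz : U (delta p x) y = 0 := by
        by_contra hcn
        have hy' : y = g0 x := usupp x y (g0 x) hcn (hg0 x)
        exact hxne (hinj (hy'.symm.trans (hgx y).symm))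
      rw [hz, mul_zero]
    have := Hc.unique Hone
    rw [this, mul_comm]
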